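/- For 2 voters and 3 alternatives, every social welfare function satisfying unanimity and independence of irrelevant alternatives is dictatorial. -/

import Mathlib

/-!
Following Sen, call a coalition `S` almost decisive over `(a, b)` if society ranks `a` above `b`
whenever `S` does and every other voter ranks `b` above `a`; by IIA this is decided on a single
profile. Unanimity and transitivity of the social order spread almost decisiveness from one pair
of alternatives to every pair (field expansion). With two voters, in a profile where the voters
disagree on `0` and `1`, the social order sides with one of them, who is therefore almost decisive
over a pair, hence over all pairs; by unanimity that voter is a dictator.
-/

namespace Arrow

variable {ι α : Type*}

def IsProfile (π : ι → α → α → Prop) : Prop :=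
  ∀ v, IsStrictTotalOrder α (π v)

def IsSocialWelfareFunction (F : (ι → α → α → Prop) → α → α → Prop) : Prop :=
  ∀ π, IsProfile π → IsStrictTotalOrder α (F π)

def Unanimous (F : (ι → α → α → Prop) → α → α → Prop) : Prop :=
  ∀ π, IsProfile π → ∀ a b, (∀ v, π v a b) → F π a b

def IndependentOfIrrelevantAlternatives (F : (ι → α → α → Prop) → α → α → Prop) : Prop :=
  ∀ π π', IsProfile π → IsProfile π' → ∀ a b, (∀ v, π v a b ↔ π' v a b) → (F π a b ↔ F π' a b)

def IsDictator (F : (ι → α → α → Prop) → α → α → Prop) (i : ι) : Prop :=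
  ∀ π, IsProfile π → ∀ a b, π i a b → F π a b

def IsAlmostDecisive (F : (ι → α → α → Prop) → α → α → Prop) (S : Set ι) (a b : α) : Prop :=
  ∀ π, IsProfile π → (∀ v ∈ S, π v a b) → (∀ v ∉ S, π v b a) → F π a b

open Classical in
noncomputable def splitProfile (S : Set ι) (r s : α → α → Prop) : ι → α → α → Prop :=
  fun v => if v ∈ S then r else s

section SplitProfile

variable {S : Set ι} {r s : α → α → Prop} {v : ι} {a b : α}

theorem isProfile_splitProfile (hr : IsStrictTotalOrder α r) (hs : IsStrictTotalOrder α s) :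
    IsProfile (splitProfile S r s) := by
  intro v
  unfold splitProfile
  split_ifs
  exacts [hr, hs]

theorem splitProfile_rel_of_mem (hv : v ∈ S) (h : r a b) : splitProfile S r s v a b := by
  simpa [splitProfile, hv] using h

theorem splitProfile_rel_of_notMem (hv : v ∉ S) (h : s a b) : splitProfile S r s v a b := by
  simpa [splitProfile, hv] using h

theorem splitProfile_rel (hr : r a b) (hs : s a b) : splitProfile S r s v a b := by
  by_cases hv : v ∈ S
  exacts [splitProfile_rel_of_mem hv hr, splitProfile_rel_of_notMem hv hs]

end SplitProfile

def rankingPosition (a b x : Fin 3) : ℕ :=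
  if x = a then 0 else if x = b then 1 else 2

/-- The ranking of `Fin 3` with `a` first, `b` second and the remaining alternative last. -/
def ranking (a b : Fin 3) (x y : Fin 3) : Prop :=
  rankingPosition a b x < rankingPosition a b y

instance (a b x y : Fin 3) : Decidable (ranking a b x y) :=
  inferInstanceAs (Decidable (_ < _))

theorem isStrictTotalOrder_ranking {a b : Fin 3} (hab : a ≠ b) :
    IsStrictTotalOrder (Fin 3) (ranking a b) where
  irrefl _ := Nat.lt_irrefl _
  trans _ _ _ := Nat.lt_trans
  trichotomous x y := by revert a b x y; decide

theorem ranking_first {a b x : Fin 3} (hax : a ≠ x) : ranking a b a x := by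
  revert a b x; decide

theorem ranking_second {a b x : Fin 3} (hab : a ≠ b) (hbx : b ≠ x) (hax : a ≠ x) :
    ranking a b b x := by
  revert a b x; decide

section Coalitions

variable {F : (ι → α → α → Prop) → α → α → Prop} {S : Set ι} {a b : α}

theorem isAlmostDecisive_of_rel (hI : IndependentOfIrrelevantAlternatives F)
    {π : ι → α → α → Prop} (hπ : IsProfile π) (hS : ∀ v ∈ S, π v a b) (hSc : ∀ v ∉ S, π v b a)
    (h : F π a b) : IsAlmostDecisive F S a b := by
  intro π' hπ' hS' hSc'
  refine (hI π π' hπ hπ' a b fun v => ?_).1 h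
  by_cases hv : v ∈ S
  · exact iff_of_true (hS v hv) (hS' v hv)
  · have := hπ v
    have := hπ' v
    exact iff_of_false (asymm_of (π v) (hSc v hv)) (asymm_of (π' v) (hSc' v hv))

theorem isAlmostDecisive_univ (hU : Unanimous F) : IsAlmostDecisive F Set.univ a b :=
  fun π hπ h _ => hU π hπ a b fun v => h v (Set.mem_univ v)

theorem isDictator_of_forall_isAlmostDecisive {i : ι}
    (h : ∀ S : Set ι, i ∈ S → ∀ a b, a ≠ b → IsAlmostDecisive F S a b) : IsDictator F i := by
  intro π hπ a b hi
  have hab : a ≠ b := by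
    rintro rfl
    have := hπ i
    exact irrefl_of (π i) a hi
  refine h {v | π v a b} hi a b hab π hπ (fun v hv => hv) fun v hv => ?_
  have := hπ v
  exact ((trichotomous_of (π v) a b).resolve_left hv).resolve_left hab

theorem isDictator_of_isAlmostDecisive_singleton {F : (Fin 2 → α → α → Prop) → α → α → Prop}
    {i : Fin 2} (hU : Unanimous F) (h : ∀ a b, a ≠ b → IsAlmostDecisive F {i} a b) :
    IsDictator F i := by
  refine isDictator_of_forall_isAlmostDecisive fun S hi a b hab => ?_
  by_cases hS : ∀ v, v ∈ S
  · exact Set.eq_univ_of_forall hS ▸ isAlmostDecisive_univ hU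
  · obtain ⟨j, hj⟩ := not_forall.1 hS
    have hSi : S = {i} := Set.eq_singleton_iff_unique_mem.2 ⟨hi, fun v hv => by
      by_contra hvi
      have hji : j ≠ i := fun hji => hj (hji ▸ hi)
      exact hj (show v = j by omega ▸ hv)⟩
    exact hSi ▸ h a b hab

end Coalitions

section FieldExpansion

variable {F : (ι → Fin 3 → Fin 3 → Prop) → Fin 3 → Fin 3 → Prop} {S : Set ι} {a b c x y : Fin 3}

theorem isAlmostDecisive_or_compl (hF : IsSocialWelfareFunction F)
    (hI : IndependentOfIrrelevantAlternatives F) (S : Set ι) (hab : a ≠ b) :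
    IsAlmostDecisive F S a b ∨ IsAlmostDecisive F Sᶜ b a := by
  set π := splitProfile S (ranking a b) (ranking b a)
  have hπ : IsProfile π :=
    isProfile_splitProfile (isStrictTotalOrder_ranking hab) (isStrictTotalOrder_ranking hab.symm)
  have hS : ∀ v ∈ S, π v a b := fun v hv => splitProfile_rel_of_mem hv (ranking_first hab)
  have hSc : ∀ v ∉ S, π v b a := fun v hv => splitProfile_rel_of_notMem hv (ranking_first hab.symm)
  have := hF π hπ
  rcases trichotomous_of (F π) a b with h | rfl | h
  · exact .inl (isAlmostDecisive_of_rel hI hπ hS hSc h)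
  · exact absurd rfl hab
  · exact .inr (isAlmostDecisive_of_rel hI hπ hSc (fun v hv => hS v (not_not.1 hv)) h)

theorem IsAlmostDecisive.replace_right (hF : IsSocialWelfareFunction F) (hU : Unanimous F)
    (hI : IndependentOfIrrelevantAlternatives F) (h : IsAlmostDecisive F S a b) (hab : a ≠ b)
    (hac : a ≠ c) : IsAlmostDecisive F S a c := by
  rcases eq_or_ne b c with rfl | hbc
  · exact h
  set π := splitProfile S (ranking a b) (ranking b c)
  have hπ : IsProfile π :=
    isProfile_splitProfile (isStrictTotalOrder_ranking hab) (isStrictTotalOrder_ranking hbc)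
  have hπab : F π a b := h π hπ (fun v hv => splitProfile_rel_of_mem hv (ranking_first hab))
    fun v hv => splitProfile_rel_of_notMem hv (ranking_first hab.symm)
  have hπbc : F π b c := hU π hπ b c fun v =>
    splitProfile_rel (ranking_second hab hbc hac) (ranking_first hbc)
  have := hF π hπ
  exact isAlmostDecisive_of_rel hI hπ (fun v hv => splitProfile_rel_of_mem hv (ranking_first hac))
    (fun v hv => splitProfile_rel_of_notMem hv (ranking_second hbc hac.symm hab.symm))
    (trans_of (F π) hπab hπbc)

theorem IsAlmostDecisive.replace_left (hF : IsSocialWelfareFunction F) (hU : Unanimous F)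
    (hI : IndependentOfIrrelevantAlternatives F) (h : IsAlmostDecisive F S a b) (hab : a ≠ b)
    (hcb : c ≠ b) : IsAlmostDecisive F S c b := by
  rcases eq_or_ne c a with rfl | hca
  · exact h
  set π := splitProfile S (ranking c a) (ranking b c)
  have hπ : IsProfile π :=
    isProfile_splitProfile (isStrictTotalOrder_ranking hca) (isStrictTotalOrder_ranking hcb.symm)
  have hπca : F π c a := hU π hπ c a fun v =>
    splitProfile_rel (ranking_first hca) (ranking_second hcb.symm hca hab.symm)
  have hπab : F π a b := h π hπ
    (fun v hv => splitProfile_rel_of_mem hv (ranking_second hca hab hcb))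
    fun v hv => splitProfile_rel_of_notMem hv (ranking_first hab.symm)
  have := hF π hπ
  exact isAlmostDecisive_of_rel hI hπ (fun v hv => splitProfile_rel_of_mem hv (ranking_first hcb))
    (fun v hv => splitProfile_rel_of_notMem hv (ranking_first hcb.symm))
    (trans_of (F π) hπca hπab)

theorem IsAlmostDecisive.expand (hF : IsSocialWelfareFunction F) (hU : Unanimous F)
    (hI : IndependentOfIrrelevantAlternatives F) (h : IsAlmostDecisive F S a b) (hab : a ≠ b)
    (hxy : x ≠ y) : IsAlmostDecisive F S x y := by
  have third : ∀ a b : Fin 3, ∃ c, c ≠ a ∧ c ≠ b := by decide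
  obtain ⟨c, hca, hcb⟩ := third a b
  have hba : IsAlmostDecisive F S b a :=
    (((h.replace_right hF hU hI hab hca.symm).replace_left hF hU hI hca.symm hcb.symm).replace_right
      hF hU hI hcb.symm hab.symm)
  by_cases hxb : x = b
  · subst hxb
    exact hba.replace_right hF hU hI hab.symm hxy
  · exact (h.replace_left hF hU hI hab hxb).replace_right hF hU hI hxb hxy

end FieldExpansion

end Arrow

open Arrow in
/-- For 2 voters and 3 alternatives, every social welfare function satisfying
unanimity and independence of irrelevant alternatives is dictatorial. -/
theorem arrow_two_voters_three_alternatives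
    (F : (Fin 2 → Fin 3 → Fin 3 → Prop) → (Fin 3 → Fin 3 → Prop))
    (hF : ∀ π : Fin 2 → Fin 3 → Fin 3 → Prop,
      (∀ v, IsStrictTotalOrder (Fin 3) (π v)) → IsStrictTotalOrder (Fin 3) (F π))
    (unanimity : ∀ π : Fin 2 → Fin 3 → Fin 3 → Prop,
      (∀ v, IsStrictTotalOrder (Fin 3) (π v)) →
      ∀ a b : Fin 3, (∀ v, π v a b) → F π a b)
    (iia : ∀ π π' : Fin 2 → Fin 3 → Fin 3 → Prop,
      (∀ v, IsStrictTotalOrder (Fin 3) (π v)) → (∀ v, IsStrictTotalOrder (Fin 3) (π' v)) →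
      ∀ a b : Fin 3, (∀ v, π v a b ↔ π' v a b) → (F π a b ↔ F π' a b)) :
    ∃ d : Fin 2, ∀ π : Fin 2 → Fin 3 → Fin 3 → Prop,
      (∀ v, IsStrictTotalOrder (Fin 3) (π v)) →
      ∀ a b : Fin 3, π d a b → F π a b := by
  obtain ⟨i, a, b, hab, hi⟩ :
      ∃ (i : Fin 2) (a b : Fin 3), a ≠ b ∧ IsAlmostDecisive F {i} a b := by
    have hc : ({0}ᶜ : Set (Fin 2)) = {1} := by ext v; fin_cases v <;> simp
    rcases isAlmostDecisive_or_compl hF iia {0} (by decide : (0 : Fin 3) ≠ 1) with h | h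
    · exact ⟨0, 0, 1, by decide, h⟩
    · exact ⟨1, 1, 0, by decide, hc ▸ h⟩
  exact ⟨i, isDictator_of_isAlmostDecisive_singleton unanimity fun x y hxy =>
    hi.expand hF unanimity iia hab hxy⟩
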